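/- arXiv:2208.10079 — 7 statements merged into one kernel-verified Lean document; each statement's English description precedes it below -/
import Mathlib

section
/- For every element a of the additive monoid ⟨a_1, …, a_m⟩ = {ℓ_1 a_1 + ⋯ + ℓ_m a_m : ℓ_i ∈ ℤ_{≥0}}, there exists a unique (k_1, …, k_m) ∈ B(A_m) such that Σ_{i=1}^m a_i k_i = a. -/
/-!
Write `d_i = gcd(a_1, …, a_i)` and `c_i = d_(i-1) / d_i`. The telescopic condition says that
`c_i * a_i` is a nonnegative combination of `a_1, …, a_(i-1)`. Existence: going down from `i = m`
to `i = 2`, divide the coefficient of `a_i` by `c_i` and trade the quotient times `c_i * a_i` for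
that combination, which only changes lower coefficients. Uniqueness: going down as well, the
lower terms vanish modulo `d_(i-1)`, so the coefficients of `a_i` agree modulo
`d_(i-1) / gcd(d_(i-1), a_i) = c_i`, and both lie in `[0, c_i)`.
-/

open Finset

/-- `dseq a i` is `gcd(a 1, …, a i)`. -/
def dseq (a : ℕ → ℕ) (i : ℕ) : ℕ := Finset.gcd (Finset.Icc 1 i) a

/-- `BAm m a ℓ` says that the tuple `(ℓ 1, …, ℓ m)` (encoded as a function on `ℕ`
supported on `[1, m]`) belongs to the set `B(A_m)`, i.e. `0 ≤ ℓ i ≤ d_{i-1}/d_i − 1`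
for all `2 ≤ i ≤ m`. -/
def BAm (m : ℕ) (a : ℕ → ℕ) (ℓ : ℕ → ℕ) : Prop :=
  (∀ j, (j < 1 ∨ m < j) → ℓ j = 0) ∧
    ∀ i, 2 ≤ i → i ≤ m → ℓ i < dseq a (i - 1) / dseq a i

/-- `Telescopic m a` says that `(a 1, …, a m)` is a telescopic sequence:
`m ≥ 2`, all `a i ≥ 2`, `gcd(a 1, …, a m) = 1`, and for every `2 ≤ i ≤ m` the number
`a i / d i` is a `ℤ_{≥0}`-linear combination of `a 1 / d (i-1), …, a (i-1) / d (i-1)`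
(the latter condition is stated multiplied through by `d (i-1) * d i`, which is equivalent). -/
def Telescopic (m : ℕ) (a : ℕ → ℕ) : Prop :=
  2 ≤ m ∧ (∀ i, 1 ≤ i → i ≤ m → 2 ≤ a i) ∧ dseq a m = 1 ∧
    ∀ i, 2 ≤ i → i ≤ m → ∃ ℓ : ℕ → ℕ, (∀ j, (j < 1 ∨ i ≤ j) → ℓ j = 0) ∧
      a i * dseq a (i - 1) = dseq a i * ∑ j ∈ Finset.Icc 1 m, ℓ j * a j

section dseq

variable {a : ℕ → ℕ}

lemma dseq_dvd {i j : ℕ} (hj : j ∈ Icc 1 i) : dseq a i ∣ a j :=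
  Finset.gcd_dvd hj

lemma dseq_succ (a : ℕ → ℕ) (i : ℕ) : dseq a (i + 1) = Nat.gcd (dseq a i) (a (i + 1)) := by
  rw [dseq, show Icc 1 (i + 1) = insert (i + 1) (Icc 1 i) by ext; simp; omega,
    Finset.gcd_insert, Nat.gcd_comm]
  rfl

lemma dseq_succ_dvd (a : ℕ → ℕ) (i : ℕ) : dseq a (i + 1) ∣ dseq a i :=
  dseq_succ a i ▸ Nat.gcd_dvd_left _ _

lemma dseq_pos (ha : 0 < a 1) {i : ℕ} (hi : 1 ≤ i) : 0 < dseq a i :=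
  Nat.pos_of_dvd_of_pos (dseq_dvd (by simpa using hi)) ha

lemma dseq_div_dseq_succ_pos (ha : 0 < a 1) {i : ℕ} (hi : 1 ≤ i) :
    0 < dseq a i / dseq a (i + 1) :=
  Nat.div_pos (Nat.le_of_dvd (dseq_pos ha hi) (dseq_succ_dvd a i)) (dseq_pos ha (by omega))

lemma dseq_dvd_sum (i : ℕ) (k : ℕ → ℕ) : dseq a i ∣ ∑ j ∈ Icc 1 i, a j * k j :=
  Finset.dvd_sum fun _ hj => (dseq_dvd hj).mul_right _

end dseq

lemma eq_of_sum_Icc_succ_eq {a k k' : ℕ → ℕ} {i : ℕ}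
    (hk : k (i + 1) < dseq a i / dseq a (i + 1)) (hk' : k' (i + 1) < dseq a i / dseq a (i + 1))
    (h : ∑ j ∈ Icc 1 (i + 1), a j * k j = ∑ j ∈ Icc 1 (i + 1), a j * k' j) :
    k (i + 1) = k' (i + 1) := by
  have hd : 0 < dseq a i := Nat.pos_of_ne_zero fun h0 => by simp [h0] at hk
  rw [Finset.sum_Icc_succ_top (by omega), Finset.sum_Icc_succ_top (by omega)] at h
  have hlow : ∑ j ∈ Icc 1 i, a j * k j ≡ ∑ j ∈ Icc 1 i, a j * k' j [MOD dseq a i] :=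
    (Nat.modEq_zero_iff_dvd.2 (dseq_dvd_sum i k)).trans
      (Nat.modEq_zero_iff_dvd.2 (dseq_dvd_sum i k')).symm
  have htop := (hlow.add_left_cancel (congrArg (· % dseq a i) h)).cancel_left_div_gcd hd
  rw [← dseq_succ] at htop
  exact htop.eq_of_lt_of_lt hk hk'

lemma eq_on_Icc_of_sum_eq {a k k' : ℕ → ℕ} (ha : 0 < a 1) {i : ℕ}
    (hk : ∀ j, 2 ≤ j → j ≤ i → k j < dseq a (j - 1) / dseq a j)
    (hk' : ∀ j, 2 ≤ j → j ≤ i → k' j < dseq a (j - 1) / dseq a j)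
    (h : ∑ j ∈ Icc 1 i, a j * k j = ∑ j ∈ Icc 1 i, a j * k' j) :
    ∀ j ∈ Icc 1 i, k j = k' j := by
  induction i with
  | zero => simp
  | succ i ih =>
    rcases Nat.eq_zero_or_pos i with rfl | hi
    · simpa [ha.ne'] using h
    have htop : k (i + 1) = k' (i + 1) :=
      eq_of_sum_Icc_succ_eq (hk _ (by omega) le_rfl) (hk' _ (by omega) le_rfl) h
    rw [Finset.sum_Icc_succ_top (by omega), Finset.sum_Icc_succ_top (by omega), htop] at h
    intro j hj
    rcases (Finset.mem_Icc.1 hj).2.eq_or_lt with rfl | hlt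
    · exact htop
    · exact ih (fun j h2 hj => hk j h2 (by omega)) (fun j h2 hj => hk' j h2 (by omega))
        (by omega) j (by simp at hj ⊢; omega)

namespace Telescopic

variable {m : ℕ} {a : ℕ → ℕ}

lemma a_one_pos (hT : Telescopic m a) : 0 < a 1 := by
  have := hT.2.1 1 le_rfl (by have := hT.1; omega)
  omega

lemma exists_relation (hT : Telescopic m a) {s : ℕ} (hs : 2 ≤ s) (hsm : s ≤ m) :
    ∃ μ : ℕ → ℕ, (∀ j, (j < 1 ∨ s ≤ j) → μ j = 0) ∧
      ∑ j ∈ Icc 1 m, μ j * a j = a s * (dseq a (s - 1) / dseq a s) := by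
  obtain ⟨μ, hμ, hrel⟩ := hT.2.2.2 s hs hsm
  refine ⟨μ, hμ, Nat.eq_of_mul_eq_mul_left (dseq_pos (i := s) hT.a_one_pos (by omega)) ?_⟩
  obtain ⟨i, rfl⟩ : ∃ i, s = i + 1 := ⟨s - 1, by omega⟩
  rw [← hrel, Nat.add_sub_cancel, Nat.mul_left_comm, Nat.mul_div_cancel' (dseq_succ_dvd a i),
    Nat.mul_comm]

lemma exists_reduce_at (hT : Telescopic m a) {s : ℕ} (hs : 2 ≤ s) (hsm : s ≤ m) {ℓ : ℕ → ℕ}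
    (hℓ : ∀ j, (j < 1 ∨ m < j) → ℓ j = 0) :
    ∃ ℓ' : ℕ → ℕ, (∀ j, (j < 1 ∨ m < j) → ℓ' j = 0) ∧ ℓ' s < dseq a (s - 1) / dseq a s ∧
      (∀ j, s < j → ℓ' j = ℓ j) ∧ ∑ j ∈ Icc 1 m, ℓ' j * a j = ∑ j ∈ Icc 1 m, ℓ j * a j := by
  obtain ⟨μ, hμ, hrel⟩ := hT.exists_relation hs hsm
  set c := dseq a (s - 1) / dseq a s
  have hc : 0 < c := by
    obtain ⟨i, rfl⟩ : ∃ i, s = i + 1 := ⟨s - 1, by omega⟩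
    exact dseq_div_dseq_succ_pos hT.a_one_pos (by omega)
  let ℓ' j := if j = s then ℓ s % c else ℓ j + ℓ s / c * μ j
  have htrade : ∀ j, ℓ' j + (if j = s then ℓ s / c * c else 0) = ℓ j + ℓ s / c * μ j := by
    intro j
    by_cases hj : j = s
    · subst hj
      simp [ℓ', hμ j (Or.inr le_rfl), Nat.mod_add_div']
    · simp [ℓ', hj]
  refine ⟨ℓ', fun j hj => ?_, by simp [ℓ', Nat.mod_lt _ hc], fun j hj => ?_, ?_⟩
  · simp [ℓ', hℓ j hj, hμ j (by omega), show j ≠ s by omega]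
  · simp [ℓ', hj.ne', hμ j (Or.inr hj.le)]
  · have hsum := congrArg (fun f => ∑ j ∈ Icc 1 m, f j * a j) (funext htrade)
    have hs_mem : s ∈ Icc 1 m := Finset.mem_Icc.2 ⟨by omega, hsm⟩
    simp only [add_mul, Finset.sum_add_distrib, ite_mul, zero_mul, Finset.sum_ite_eq', hs_mem,
      if_true, mul_assoc, ← Finset.mul_sum, hrel] at hsum
    linarith [mul_comm (a s) c]

lemma exists_BAm_sum_eq_of_lt_above (hT : Telescopic m a) (t : ℕ) {ℓ : ℕ → ℕ}
    (hℓ : ∀ j, (j < 1 ∨ m < j) → ℓ j = 0)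
    (hlt : ∀ i, t < i → 2 ≤ i → i ≤ m → ℓ i < dseq a (i - 1) / dseq a i) :
    ∃ k, BAm m a k ∧ ∑ j ∈ Icc 1 m, k j * a j = ∑ j ∈ Icc 1 m, ℓ j * a j := by
  induction t generalizing ℓ with
  | zero => exact ⟨ℓ, ⟨hℓ, fun i h2 hm => hlt i (by omega) h2 hm⟩, rfl⟩
  | succ t ih =>
    by_cases hs : 2 ≤ t + 1 ∧ t + 1 ≤ m
    · obtain ⟨ℓ', hℓ', hlt', heq, hsum⟩ := hT.exists_reduce_at hs.1 hs.2 hℓ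
      refine hsum ▸ ih hℓ' fun i hi h2 hm => ?_
      rcases (Nat.succ_le_of_lt hi).eq_or_lt with rfl | hi'
      · exact hlt'
      · exact heq i hi' ▸ hlt i hi' h2 hm
    · exact ih hℓ fun i hi h2 hm => hlt i (by omega) h2 hm

end Telescopic

/-- For every element `n` of the additive monoid `⟨a 1, …, a m⟩` there is a unique tuple
`(k 1, …, k m) ∈ B(A_m)` with `Σ_{i=1}^m a i * k i = n`. -/
theorem exists_unique_BAm_rep (m : ℕ) (a : ℕ → ℕ) (hT : Telescopic m a) (n : ℕ)
    (hn : ∃ ℓ : ℕ → ℕ, (∀ j, (j < 1 ∨ m < j) → ℓ j = 0) ∧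
      n = ∑ j ∈ Finset.Icc 1 m, ℓ j * a j) :
    ∃! k : ℕ → ℕ, BAm m a k ∧ ∑ i ∈ Finset.Icc 1 m, a i * k i = n := by
  obtain ⟨ℓ, hℓ, rfl⟩ := hn
  obtain ⟨k, hk, hsum⟩ := hT.exists_BAm_sum_eq_of_lt_above m hℓ fun i hi _ hm => by omega
  simp only [mul_comm (k _)] at hsum
  refine ⟨k, ⟨hk, hsum⟩, fun k' ⟨hk', hsum'⟩ => funext fun j => ?_⟩
  by_cases hj : j ∈ Icc 1 m
  · exact eq_on_Icc_of_sum_eq hT.a_one_pos hk'.2 hk.2 (hsum'.trans hsum.symm) j hj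
  · rw [hk'.1 j (by simp at hj; omega), hk.1 j (by simp at hj; omega)]
end

section
/- The Schur function S_{μ(A_m)}(T) = det(p_{μ_i − i + j}(T))_{1 ≤ i, j ≤ g}, where μ(A_m) = (w_g − (g−1), w_{g−1} − (g−2), …, w_2 − 1, w_1) is the partition attached to the gap sequence, is a polynomial only in the variables T_{w_1}, …, T_{w_g}; that is, it lies in the ℚ-subalgebra of ℚ[T_1, T_2, …] generated by T_{w_1}, …, T_{w_g}. -/
/-!
Differentiating `exp (Σ T_j k^j)` in `T_r` multiplies it by `k^r`, so `∂p_n/∂T_r = p_{n-r}`.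
Hence differentiating the Schur determinant in `T_x` differentiates one row at a time and replaces
the row of a gap `w` by the row of `w - x`. If `x` lies in the semigroup, then `w - x` is either
negative, giving a zero row, or again a gap (otherwise `w = (w - x) + x` would lie in the
semigroup), giving a repeated row. So the determinant has vanishing partial derivatives in all
non-gap variables, which over `ℚ` means that only the gap variables occur in it.
-/

open Finset

noncomputable section

/-- The formal power series `f = Σ_{j≥1} T_j k^j` in one variable `k` over the
polynomial ring `ℚ[T_1, T_2, …]` (with `T_j = X j`). -/
def fSeries : PowerSeries (MvPolynomial ℕ ℚ) :=
  PowerSeries.mk fun j => if j = 0 then 0 else MvPolynomial.X j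

/-- `pPoly n` is the polynomial `p_n(T)`, the coefficient of `k^n` in `Σ_{i=0}^∞ f^i/i!`. -/
def pPoly (n : ℕ) : MvPolynomial ℕ ℚ :=
  ∑ i ∈ Finset.range (n + 1),
    MvPolynomial.C ((i.factorial : ℚ)⁻¹) * PowerSeries.coeff (R := MvPolynomial ℕ ℚ) n (fSeries ^ i)

/-- `pPolyZ` extends `pPoly` by `0` to negative indices. -/
def pPolyZ (n : ℤ) : MvPolynomial ℕ ℚ := if 0 ≤ n then pPoly n.toNat else 0

open MvPolynomial

namespace Derivation

section

variable {R A M : Type*} [CommSemiring R] [CommSemiring A] [Algebra R A] [AddCommMonoid M]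
  [Module A M] [Module R M]

theorem leibniz_prod {ι : Type*} [DecidableEq ι] (D : Derivation R A M) (s : Finset ι)
    (f : ι → A) : D (∏ i ∈ s, f i) = ∑ t ∈ s, (∏ i ∈ s.erase t, f i) • D (f t) := by
  induction s using Finset.induction with
  | empty => simp
  | insert a s ha ih =>
    rw [prod_insert ha, leibniz, ih, sum_insert ha, erase_insert ha, smul_sum, add_comm]
    congr 1
    refine sum_congr rfl fun t ht => ?_
    rw [erase_insert_of_ne (ne_of_mem_of_not_mem ht ha).symm,
      prod_insert fun h => ha (mem_of_mem_erase h), mul_smul]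

end

theorem map_det {R A n : Type*} [CommSemiring R] [CommRing A] [Algebra R A] [Fintype n]
    [DecidableEq n] (D : Derivation R A A) (M : Matrix n n A) :
    D M.det = ∑ t, (M.updateRow t fun j => D (M t j)).det := by
  have hrow : ∀ t, (M.updateRow t fun j => D (M t j)).det = ∑ σ : Equiv.Perm n,
      Equiv.Perm.sign σ • ((∏ i ∈ univ.erase t, M i (σ i)) * D (M t (σ t))) := by
    intro t
    rw [← Matrix.det_transpose, Matrix.det_apply]
    refine sum_congr rfl fun σ _ => ?_
    rw [← prod_erase_mul _ _ (mem_univ t)]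
    congr 2
    · refine prod_congr rfl fun i hi => ?_
      simp [Matrix.updateRow_ne (ne_of_mem_erase hi)]
    · simp
  rw [← M.det_transpose, Matrix.det_apply, map_sum]
  simp_rw [hrow]
  rw [sum_comm]
  refine sum_congr rfl fun σ _ => ?_
  rw [map_smul_of_tower, leibniz_prod, smul_sum]
  rfl

section

variable {R A : Type*} [CommSemiring R] [CommSemiring A] [Algebra R A]

def mapPowerSeries (D : Derivation R A A) : Derivation R (PowerSeries A) (PowerSeries A) where
  toFun φ := PowerSeries.mk fun n => D (PowerSeries.coeff n φ)
  map_add' φ ψ := by ext n; simp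
  map_smul' r φ := by ext n; simp
  map_one_eq_zero' := by ext n; simp [PowerSeries.coeff_one, apply_ite D]
  leibniz' φ ψ := by
    rw [smul_eq_mul, smul_eq_mul, mul_comm ψ]
    ext n
    simp only [LinearMap.coe_mk, AddHom.coe_mk, map_add, PowerSeries.coeff_mk,
      PowerSeries.coeff_mul, map_sum, leibniz, smul_eq_mul, sum_add_distrib]
    exact congrArg _ (sum_congr rfl fun _ _ => mul_comm _ _)

@[simp]
theorem coeff_mapPowerSeries (D : Derivation R A A) (n : ℕ) (φ : PowerSeries A) :
    PowerSeries.coeff n (D.mapPowerSeries φ) = D (PowerSeries.coeff n φ) :=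
  PowerSeries.coeff_mk n fun n => D (PowerSeries.coeff n φ)

end

end Derivation

def expTrunc {A : Type*} [Semiring A] [Module ℚ A] (N : ℕ) (a : A) : A :=
  ∑ i ∈ range N, (i.factorial : ℚ)⁻¹ • a ^ i

theorem Derivation.map_expTrunc {A : Type*} [CommSemiring A] [Algebra ℚ A] (D : Derivation ℚ A A)
    (N : ℕ) (a : A) : D (expTrunc (N + 1) a) = expTrunc N a * D a := by
  rw [expTrunc, sum_range_succ', pow_zero, map_add, map_smul, map_one_eq_zero, smul_zero,
    add_zero, map_sum, expTrunc, sum_mul]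
  refine sum_congr rfl fun i _ => ?_
  rw [map_smul, leibniz_pow, Nat.add_sub_cancel, smul_mul_assoc, smul_eq_mul,
    ← Nat.cast_smul_eq_nsmul ℚ, smul_smul]
  congr 1
  rw [Nat.factorial_succ]
  push_cast
  field_simp

theorem MvPolynomial.notMem_vars_of_pderiv_eq_zero {R σ : Type*} [CommSemiring R]
    [NoZeroDivisors R] [CharZero R] {p : MvPolynomial σ R} {i : σ} (h : pderiv i p = 0) :
    i ∉ p.vars := by
  classical
  intro hi
  obtain ⟨d, hd, hdi⟩ := (mem_vars_iff_mem_support i).mp hi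
  have hsplit : d - Finsupp.single i 1 + Finsupp.single i 1 = d :=
    tsub_add_cancel_of_le (Finsupp.single_le_iff.mpr (Nat.one_le_iff_ne_zero.mpr
      (Finsupp.mem_support_iff.mp hdi)))
  have hcoeff := coeff_pderiv (i := i) p (d - Finsupp.single i 1)
  rw [h, coeff_zero, hsplit] at hcoeff
  exact mul_ne_zero (mem_support_iff.mp hd) (Nat.cast_add_one_ne_zero _) hcoeff.symm

theorem MvPolynomial.mem_adjoin_X_of_pderiv_eq_zero {R σ : Type*} [CommSemiring R]
    [NoZeroDivisors R] [CharZero R] {p : MvPolynomial σ R} {s : Set σ}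
    (h : ∀ i ∉ s, pderiv i p = 0) : p ∈ Algebra.adjoin R (X '' s) := by
  rw [← supported_eq_adjoin_X, mem_supported]
  exact fun i hi => by_contra fun his => notMem_vars_of_pderiv_eq_zero (h i his) hi

theorem coeff_fSeries_pow_eq_zero {n i : ℕ} (h : n < i) :
    PowerSeries.coeff n (fSeries ^ i) = 0 := by
  have hX : PowerSeries.X ∣ fSeries := PowerSeries.X_dvd_iff.mpr (by simp [fSeries])
  exact PowerSeries.X_pow_dvd_iff.mp (pow_dvd_pow_of_dvd hX i) n h

theorem pPoly_eq_coeff_expTrunc {n N : ℕ} (h : n < N) :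
    pPoly n = PowerSeries.coeff n (expTrunc N fSeries) := by
  rw [expTrunc, map_sum, pPoly]
  refine sum_subset_zero_on_sdiff (range_subset_range.mpr h) (fun i hi => ?_) (fun i _ => ?_)
  · rw [mem_sdiff, mem_range, mem_range] at hi
    rw [PowerSeries.coeff_smul, coeff_fSeries_pow_eq_zero (by omega), smul_zero]
  · rw [PowerSeries.coeff_smul, C_mul']

theorem mapPowerSeries_pderiv_fSeries (r : ℕ) :
    (pderiv r).mapPowerSeries fSeries = if r = 0 then 0 else PowerSeries.X ^ r := by
  refine PowerSeries.ext fun n => ?_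
  rw [Derivation.coeff_mapPowerSeries, fSeries, PowerSeries.coeff_mk, apply_ite (pderiv r),
    map_zero]
  split_ifs <;> simp_all [PowerSeries.coeff_X_pow, pderiv_X, Pi.single_apply, eq_comm]

theorem pderiv_pPoly (r n : ℕ) :
    pderiv r (pPoly n) = if r = 0 ∨ n < r then 0 else pPoly (n - r) := by
  rw [pPoly_eq_coeff_expTrunc n.lt_succ_self, ← Derivation.coeff_mapPowerSeries,
    Derivation.map_expTrunc, mapPowerSeries_pderiv_fSeries]
  split_ifs <;> simp_all [PowerSeries.coeff_mul_X_pow']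
  rw [pPoly_eq_coeff_expTrunc (show n - r < n by omega)]

theorem pderiv_pPolyZ (r : ℕ) (z : ℤ) :
    pderiv r (pPolyZ z) = if r = 0 then 0 else pPolyZ (z - r) := by
  unfold pPolyZ
  rw [apply_ite (pderiv r), pderiv_pPoly, map_zero]
  split_ifs <;> first | rfl | omega | (congr 1; omega)

theorem pPolyZ_of_neg {z : ℤ} (h : z < 0) : pPolyZ z = 0 := if_neg (by omega)

section SchurDeterminant

variable {ι : Type*} [Fintype ι] [DecidableEq ι] {v : ι → ℕ} {e : ι → ℤ}

theorem pderiv_det_pPolyZ_eq_zero (he : ∀ j, e j ≤ 0)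
    (hv : ∀ x y, x ∉ Set.range v → y ∉ Set.range v → x + y ∉ Set.range v)
    {x : ℕ} (hx : x ∉ Set.range v) :
    pderiv x (Matrix.of fun i j => pPolyZ (v i + e j)).det = 0 := by
  rw [Derivation.map_det]
  refine sum_eq_zero fun t _ => ?_
  simp only [Matrix.of_apply, pderiv_pPolyZ]
  by_cases hzero : x = 0 ∨ v t < x
  · refine Matrix.det_eq_zero_of_row_eq_zero t fun j => ?_
    rw [Matrix.updateRow_self]
    split_ifs
    · rfl
    · exact pPolyZ_of_neg (by have := he j; omega)
  · push Not at hzero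
    obtain ⟨s, hs⟩ : v t - x ∈ Set.range v := by_contra fun h =>
      hv _ _ h hx (by rw [Nat.sub_add_cancel hzero.2]; exact ⟨t, rfl⟩)
    have hts : t ≠ s := by rintro rfl; omega
    refine Matrix.det_zero_of_row_eq hts (funext fun j => ?_)
    rw [Matrix.updateRow_self, Matrix.updateRow_ne hts.symm, Matrix.of_apply, if_neg hzero.1, hs]
    congr 1
    omega

theorem det_pPolyZ_mem_adjoin_X (he : ∀ j, e j ≤ 0)
    (hv : ∀ x y, x ∉ Set.range v → y ∉ Set.range v → x + y ∉ Set.range v) :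
    (Matrix.of fun i j => pPolyZ (v i + e j)).det ∈ Algebra.adjoin ℚ (X '' Set.range v) :=
  mem_adjoin_X_of_pderiv_eq_zero fun _ hx => pderiv_det_pPolyZ_eq_zero he hv hx

end SchurDeterminant

/-- The monoid `⟨a 1, …, a m⟩`. -/
def natCombinations (m : ℕ) (a : ℕ → ℕ) : AddSubmonoid ℕ where
  carrier :=
    {n | ∃ ℓ : ℕ → ℕ, (∀ j, (j < 1 ∨ m < j) → ℓ j = 0) ∧ n = ∑ j ∈ Icc 1 m, ℓ j * a j}
  add_mem' := by
    rintro _ _ ⟨ℓ, hℓ, rfl⟩ ⟨ℓ', hℓ', rfl⟩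
    exact ⟨ℓ + ℓ', fun j hj => by simp [hℓ j hj, hℓ' j hj],
      by simp [add_mul, sum_add_distrib]⟩
  zero_mem' := ⟨0, fun _ _ => rfl, by simp⟩

/-- Let `G` be the finite set of gaps of the numerical semigroup `⟨a 1, …, a m⟩`
generated by a telescopic sequence, `g = G.card`, and let `w 0 < w 1 < ⋯ < w (g-1)`
enumerate the gaps (`w` strictly monotone with range `G`).  The Schur function
`S_{μ(A_m)}(T) = det (p_{μ_i − i + j}(T))_{1 ≤ i,j ≤ g}` attached to the partition
`μ(A_m) = (w_g − (g−1), …, w_2 − 1, w_1)` lies in the `ℚ`-subalgebra of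
`ℚ[T_1, T_2, …]` generated by the variables `T_{w_1}, …, T_{w_g}`. -/
theorem schur_mem_adjoin_gap_vars (m : ℕ) (a : ℕ → ℕ)
    (G : Finset ℕ)
    (hG : ∀ n, n ∈ G ↔ ¬∃ ℓ : ℕ → ℕ, (∀ j, (j < 1 ∨ m < j) → ℓ j = 0) ∧
      n = ∑ j ∈ Finset.Icc 1 m, ℓ j * a j)
    (w : Fin G.card → ℕ) (hwG : ∀ n, n ∈ G ↔ ∃ i, w i = n) :
    Matrix.det (Matrix.of fun i j : Fin G.card =>
      pPolyZ ((w ⟨G.card - 1 - i.val, by have := i.isLt; omega⟩ : ℤ) -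
        (G.card - 1 - i.val : ℕ) - (i.val : ℤ) + (j.val : ℤ))) ∈
      Algebra.adjoin ℚ (Set.range fun i : Fin G.card =>
        (MvPolynomial.X (w i) : MvPolynomial ℕ ℚ)) := by
  have hrange : Set.range (w ∘ Fin.rev) = G := by
    ext n
    rw [Fin.rev_surjective.range_comp, Set.mem_range, Finset.mem_coe, hwG]
  have hgaps : ∀ x y, x ∉ Set.range (w ∘ Fin.rev) → y ∉ Set.range (w ∘ Fin.rev) →
      x + y ∉ Set.range (w ∘ Fin.rev) := by
    have hG' : ∀ n, n ∈ G ↔ n ∉ natCombinations m a := hG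
    simp only [hrange, Finset.mem_coe, hG', not_not]
    exact fun _ _ => add_mem
  have hmatrix : (Matrix.of fun i j : Fin G.card =>
      pPolyZ ((w ⟨G.card - 1 - i.val, by have := i.isLt; omega⟩ : ℤ) -
        (G.card - 1 - i.val : ℕ) - (i.val : ℤ) + (j.val : ℤ))) =
      Matrix.of fun i (j : Fin G.card) =>
        pPolyZ ((w ∘ Fin.rev) i + ((j : ℤ) - (G.card - 1 : ℕ))) := by
    refine Matrix.ext fun i j => ?_
    have hrev : (⟨G.card - 1 - i.val, by omega⟩ : Fin G.card) = Fin.rev i := by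
      ext; simp only [Fin.val_rev]; omega
    simp only [Matrix.of_apply, Function.comp_apply, hrev]
    congr 1
    omega
  rw [hmatrix, Set.range_comp' X w, ← Fin.rev_surjective.range_comp]
  exact det_pPolyZ_mem_adjoin_X (fun j => by omega) hgaps

end
end

section
/- For any partition μ = (μ_1 ≥ μ_2 ≥ ⋯ ≥ μ_ℓ ≥ 0) of non-negative integers, the polynomial S_μ(u) = det(p_{μ_i − i + j}(u))_{1 ≤ i, j ≤ ℓ} is Hurwitz integral over ℤ: for every (k_1, …, k_g) ∈ ℤ_{≥0}^g, the number k_1! ⋯ k_g! times the coefficient of u_1^{k_1} ⋯ u_g^{k_g} in S_μ(u) is an integer. -/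
/-!
Hurwitz-integral polynomials over `R` form a subring: in `d! · coeff_d (f g)` the factorials split
as `d! = binom(d, e) · e! · (d - e)!`, so only integer multiples of products of normalized
coefficients of `f` and `g` occur. Each `p_n` is Hurwitz integral over `ℤ`, its normalized
coefficients being `0` or `1`, hence so is the determinant `S_μ` of a matrix of them.
-/

open Finset

noncomputable section

open Nat

theorem prod_factorial_add {σ K : Type*} [Fintype σ] [CommSemiring K] (x y : σ → ℕ) :
    ∏ i, ((x i + y i)! : K) =
      (∏ i, ((x i + y i).choose (y i) : K)) * ((∏ i, ((x i)! : K)) * ∏ i, ((y i)! : K)) := by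
  simp only [← prod_mul_distrib, ← Nat.add_choose_mul_factorial_mul_factorial, Nat.cast_mul,
    mul_assoc]

namespace MvPolynomial

variable (σ : Type*) [Fintype σ]

def hurwitzIntegral {K : Type*} [CommRing K] (R : Subring K) : Subring (MvPolynomial σ K) where
  carrier := {f | ∀ d : σ →₀ ℕ, (∏ i, ((d i)! : K)) * coeff d f ∈ R}
  zero_mem' d := by simp
  one_mem' d := by
    classical
    rw [coeff_one]
    split_ifs with h
    · simp [← h]
    · simp
  add_mem' hf hg d := by simpa [mul_add] using add_mem (hf d) (hg d)
  neg_mem' hf d := by simpa using neg_mem (hf d)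
  mul_mem' {f g} hf hg d := by
    classical
    rw [coeff_mul, mul_sum]
    refine sum_mem fun x hx => ?_
    rw [HasAntidiagonal.mem_antidiagonal] at hx
    simp only [← hx, Finsupp.add_apply, prod_factorial_add]
    convert mul_mem (natCast_mem R (∏ i, (x.1 i + x.2 i).choose (x.2 i)))
      (mul_mem (hf x.1) (hg x.2)) using 1
    push_cast; ring

variable {σ}

theorem mem_hurwitzIntegral_of_coeff {K : Type*} [Field K] [CharZero K] {R : Subring K}
    {f : MvPolynomial σ K} (hf : ∀ d, coeff d f = 0 ∨ coeff d f = (∏ i, ((d i)! : K))⁻¹) :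
    f ∈ hurwitzIntegral σ R := fun d => by
  rcases hf d with h | h
  · simp [h]
  · rw [h, mul_inv_cancel₀ (prod_ne_zero_iff.2 fun i _ => cast_ne_zero.2 (factorial_ne_zero _))]
    exact one_mem R

end MvPolynomial

theorem Subring.det_mem {n K : Type*} [Fintype n] [DecidableEq n] [CommRing K] (S : Subring K)
    (M : Matrix n n K) (hM : ∀ i j, M i j ∈ S) : M.det ∈ S := by
  rw [Matrix.det_apply]
  refine sum_mem fun τ _ => ?_
  rw [Units.smul_def]
  exact zsmul_mem (prod_mem fun i _ => hM _ _) _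

theorem schur_hurwitz_integral_general
    (G : Finset ℕ)
    (w : Fin G.card → ℕ)
    (P : ℤ → MvPolynomial (Fin G.card) ℚ)
    (hP0 : ∀ n : ℤ, n < 0 → P n = 0)
    (hP : ∀ n : ℤ, 0 ≤ n → ∀ d : Fin G.card →₀ ℕ,
      MvPolynomial.coeff d (P n) =
        if (∑ i, (w i : ℤ) * d i) = n then (∏ i, ((d i).factorial : ℚ))⁻¹ else 0)
    (L : ℕ) (μ : Fin L → ℕ) :
    ∀ d : Fin G.card →₀ ℕ, ∃ z : ℤ,
      (∏ i, ((d i).factorial : ℚ)) *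
        MvPolynomial.coeff d
          (Matrix.det (Matrix.of fun i j : Fin L =>
            P ((μ i : ℤ) - (i.val : ℤ) + (j.val : ℤ)))) = (z : ℚ) := by
  have hPn (n : ℤ) : P n ∈ MvPolynomial.hurwitzIntegral _ (⊥ : Subring ℚ) := by
    rcases lt_or_ge n 0 with hn | hn
    · rw [hP0 n hn]
      exact zero_mem _
    · exact MvPolynomial.mem_hurwitzIntegral_of_coeff fun d => by
        rw [hP n hn d]
        split_ifs <;> simp
  have hS : Matrix.det (Matrix.of fun i j : Fin L => P ((μ i : ℤ) - i + j)) ∈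
      MvPolynomial.hurwitzIntegral _ (⊥ : Subring ℚ) :=
    Subring.det_mem _ _ fun i j => hPn _
  exact fun d => (Subring.mem_bot.1 (hS d)).imp fun _ hz => hz.symm

/-- Let `w 0 < ⋯ < w (g−1)` be the gaps of the numerical semigroup generated by a
telescopic sequence, `g = G.card`.  For `n : ℤ` let `P n ∈ ℚ[u_1, …, u_g]` be the
polynomial `p_n(u) = Σ u_1^{n_1} ⋯ u_g^{n_g}/(n_1! ⋯ n_g!)` (sum over tuples with
`Σ w_i n_i = n`), characterized here by its coefficients, with `P n = 0` for `n < 0`.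
For any partition `μ = (μ_1 ≥ ⋯ ≥ μ_L ≥ 0)`, the Schur polynomial
`S_μ(u) = det (p_{μ_i − i + j}(u))_{1 ≤ i,j ≤ L}` is Hurwitz integral over `ℤ`:
for every exponent tuple `d`, the number `d_1! ⋯ d_g!` times the coefficient of
`u_1^{d_1} ⋯ u_g^{d_g}` in `S_μ(u)` is an integer. -/
theorem schur_hurwitz_integral (m : ℕ) (a : ℕ → ℕ) (hT : Telescopic m a)
    (G : Finset ℕ)
    (hG : ∀ n, n ∈ G ↔ ¬∃ ℓ : ℕ → ℕ, (∀ j, (j < 1 ∨ m < j) → ℓ j = 0) ∧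
      n = ∑ j ∈ Finset.Icc 1 m, ℓ j * a j)
    (w : Fin G.card → ℕ) (hw : StrictMono w) (hwG : ∀ n, n ∈ G ↔ ∃ i, w i = n)
    (P : ℤ → MvPolynomial (Fin G.card) ℚ)
    (hP0 : ∀ n : ℤ, n < 0 → P n = 0)
    (hP : ∀ n : ℤ, 0 ≤ n → ∀ d : Fin G.card →₀ ℕ,
      MvPolynomial.coeff d (P n) =
        if (∑ i, (w i : ℤ) * d i) = n then (∏ i, ((d i).factorial : ℚ))⁻¹ else 0)
    (L : ℕ) (μ : Fin L → ℕ) (hμ : Antitone μ) :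
    ∀ d : Fin G.card →₀ ℕ, ∃ z : ℤ,
      (∏ i, ((d i).factorial : ℚ)) *
        MvPolynomial.coeff d
          (Matrix.det (Matrix.of fun i j : Fin L =>
            P ((μ i : ℤ) - (i.val : ℤ) + (j.val : ℤ)))) = (z : ℚ) :=
  schur_hurwitz_integral_general G w P hP0 hP L μ

end
end

section
/- Let R be a subring of ℂ, let g ≥ 1, let f be a formal power series over ℂ in variables u_1, …, u_g that is Hurwitz integral over R, and let M = (m_{ij}) be a g × g matrix all of whose entries lie in R. Then the formal power series f(Mu), obtained from f by substituting each variable u_i by the linear form Σ_{j=1}^g m_{ij} u_j, is Hurwitz integral over R. -/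
/-
By the multinomial theorem, the coefficient of `u^d` in `∏ᵢ (Σⱼ mᵢⱼ uⱼ)^{eᵢ}` is a sum over
ℕ-matrices `k` with row sums `e` and column sums `d` of `∏ᵢ multinomial(kᵢ) · ∏ mᵢⱼ^{kᵢⱼ}`.
Both `d! · ∏ᵢ multinomial(row i)` and `e! · ∏ⱼ multinomial(column j)` equal `d! e! / ∏ kᵢⱼ!`,
so `d!` times that coefficient is `e!` times an element of `R`; and `e! · coeff_e f ∈ R`.
-/

open Finset

noncomputable section

/-- A formal power series `f` over `ℂ` in variables `u_1, …, u_g` is Hurwitz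
integral over a subring `R ⊆ ℂ` if for every exponent tuple `d` the number
`d_1! ⋯ d_g!` times the coefficient of `u^d` in `f` belongs to `R`. -/
def HurwitzIntegral (g : ℕ) (R : Subring ℂ) (f : MvPowerSeries (Fin g) ℂ) : Prop :=
  ∀ d : Fin g →₀ ℕ, (∏ i, ((d i).factorial : ℂ)) * MvPowerSeries.coeff d f ∈ R

open scoped Nat

section

variable {ι κ : Type*} [Fintype ι] [Fintype κ]

theorem Nat.prod_factorial_colSum_mul_prod_multinomial_rows (k : ι → κ → ℕ) :
    (∏ j, (∑ i, k i j)!) * ∏ i, Nat.multinomial univ (k i) =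
      (∏ i, (∑ j, k i j)!) * ∏ j, Nat.multinomial univ (fun i => k i j) := by
  have hpos : 0 < ∏ i, ∏ j, (k i j)! :=
    prod_pos fun _ _ => prod_pos fun _ _ => Nat.factorial_pos _
  have hrow : (∏ i, Nat.multinomial univ (k i)) * ∏ i, ∏ j, (k i j)! = ∏ i, (∑ j, k i j)! := by
    rw [← prod_mul_distrib]
    exact prod_congr rfl fun i _ => Nat.multinomial_spec _ _ ▸ mul_comm _ _
  have hcol : (∏ j, Nat.multinomial univ (fun i => k i j)) * ∏ i, ∏ j, (k i j)! =
      ∏ j, (∑ i, k i j)! := by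
    rw [prod_comm, ← prod_mul_distrib]
    exact prod_congr rfl fun j _ => Nat.multinomial_spec _ _ ▸ mul_comm _ _
  apply Nat.eq_of_mul_eq_mul_right hpos
  calc _ = (∏ j, (∑ i, k i j)!) * ∏ i, (∑ j, k i j)! := by rw [mul_assoc, hrow]
    _ = _ := by rw [mul_assoc, hcol, mul_comm]

end

section

open MvPolynomial

variable {ι σ A : Type*} [Fintype ι] [DecidableEq ι] [Fintype σ] [DecidableEq σ] [CommSemiring A]

theorem MvPolynomial.prod_linearForm_pow_eq_sum (M : ι → σ → A) (e : ι → ℕ) :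
    ∏ i, (∑ j, C (M i j) * X j : MvPolynomial σ A) ^ e i =
      ∑ k ∈ Fintype.piFinset fun i => piAntidiag univ (e i),
        monomial (Finsupp.equivFunOnFinite.symm fun j => ∑ i, k i j)
          ((∏ i, (Nat.multinomial univ (k i) : A)) * ∏ i, ∏ j, M i j ^ k i j) := by
  have hfactor (i : ι) (k : σ → ℕ) :
      (Nat.multinomial univ k : MvPolynomial σ A) * ∏ j, (C (M i j) * X j) ^ k j =
        monomial (∑ j, Finsupp.single j (k j)) (Nat.multinomial univ k * ∏ j, M i j ^ k j) := by
    simp only [C_mul_X_eq_monomial, monomial_pow, Finsupp.smul_single_one, ← monomial_sum_prod,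
      ← nsmul_eq_mul, ← map_nsmul]
  simp_rw [sum_pow_eq_sum_piAntidiag, prod_univ_sum, hfactor, ← monomial_sum_prod,
    prod_mul_distrib]
  refine sum_congr rfl fun k _ => ?_
  congr 2
  ext j
  simp [Finsupp.finsetSum_apply, Finsupp.single_apply]

theorem MvPolynomial.exists_prod_factorial_mul_coeff_prod_linearForm_pow (R : Subsemiring A)
    (M : ι → σ → A) (hM : ∀ i j, M i j ∈ R) (e : ι → ℕ) (d : σ →₀ ℕ) :
    ∃ r ∈ R, (∏ j, ((d j)! : A)) * coeff d (∏ i, (∑ j, C (M i j) * X j) ^ e i) =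
      (∏ i, ((e i)! : A)) * r := by
  refine ⟨∑ k ∈ Fintype.piFinset fun i => piAntidiag univ (e i),
    if (Finsupp.equivFunOnFinite.symm fun j => ∑ i, k i j) = d then
      (∏ j, (Nat.multinomial univ (fun i => k i j) : A)) * ∏ i, ∏ j, M i j ^ k i j
    else 0, sum_mem fun k _ => ?_, ?_⟩
  · split_ifs
    · exact mul_mem (prod_mem fun j _ => natCast_mem R _)
        (prod_mem fun i _ => prod_mem fun j _ => pow_mem (hM i j) _)
    · exact zero_mem R
  rw [prod_linearForm_pow_eq_sum, coeff_sum, mul_sum, mul_sum]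
  refine sum_congr rfl fun k hk => ?_
  rw [coeff_monomial]
  split_ifs with hkd
  · subst hkd
    have hrow (i : ι) : ∑ j, k i j = e i := (mem_piAntidiag.1 (Fintype.mem_piFinset.1 hk i)).1
    have key := congrArg (Nat.cast : ℕ → A) (Nat.prod_factorial_colSum_mul_prod_multinomial_rows k)
    simp only [hrow, Nat.cast_mul, Nat.cast_prod] at key
    simp only [Finsupp.coe_equivFunOnFinite_symm]
    rw [← mul_assoc, key, mul_assoc]
  · rw [mul_zero, mul_zero]

end

theorem hurwitz_integral_subst_linear_general (g : ℕ) (R : Subring ℂ)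
    (M : Matrix (Fin g) (Fin g) ℂ) (hM : ∀ i j, M i j ∈ R)
    (f : MvPowerSeries (Fin g) ℂ) (hf : HurwitzIntegral g R f)
    (F : MvPowerSeries (Fin g) ℂ)
    (hF : ∀ d : Fin g →₀ ℕ, MvPowerSeries.coeff d F =
      ∑ e ∈ Finset.Nat.antidiagonalTuple g (∑ i, d i),
        MvPowerSeries.coeff (Finsupp.equivFunOnFinite.symm e) f *
          MvPolynomial.coeff d
            (∏ i, (∑ j, MvPolynomial.C (M i j) * MvPolynomial.X j :
              MvPolynomial (Fin g) ℂ) ^ e i)) :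
    HurwitzIntegral g R F := by
  intro d
  rw [hF d, mul_sum]
  refine R.sum_mem fun e _ => ?_
  obtain ⟨r, hr, hdr⟩ :=
    MvPolynomial.exists_prod_factorial_mul_coeff_prod_linearForm_pow R.toSubsemiring M hM e d
  have hfe := hf (Finsupp.equivFunOnFinite.symm e)
  simp only [Finsupp.coe_equivFunOnFinite_symm] at hfe
  rw [mul_left_comm, hdr, mul_left_comm, ← mul_assoc]
  exact R.mul_mem hfe hr

/-- Let `R` be a subring of `ℂ`, `g ≥ 1`, `f` a formal power series in `u_1, …, u_g`
over `ℂ` that is Hurwitz integral over `R`, and `M` a `g × g` matrix with entries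
in `R`.  Let `F = f(Mu)` be the power series obtained from `f` by substituting
each variable `u_i` by the linear form `Σ_j M i j * u_j`; this substitution is
characterized coefficientwise by `hF`: the coefficient of `u^d` in `F` is
`Σ_e (coeff of u^e in f) · (coeff of u^d in ∏_i (Σ_j M i j u_j)^{e_i})`, where `e`
ranges over the exponent tuples of total degree `Σ d` (only those contribute,
since the substituted linear forms are homogeneous of degree `1`).
Then `F` is Hurwitz integral over `R`. -/
theorem hurwitz_integral_subst_linear (g : ℕ) (hg : 1 ≤ g) (R : Subring ℂ)
    (M : Matrix (Fin g) (Fin g) ℂ) (hM : ∀ i j, M i j ∈ R)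
    (f : MvPowerSeries (Fin g) ℂ) (hf : HurwitzIntegral g R f)
    (F : MvPowerSeries (Fin g) ℂ)
    (hF : ∀ d : Fin g →₀ ℕ, MvPowerSeries.coeff d F =
      ∑ e ∈ Finset.Nat.antidiagonalTuple g (∑ i, d i),
        MvPowerSeries.coeff (Finsupp.equivFunOnFinite.symm e) f *
          MvPolynomial.coeff d
            (∏ i, (∑ j, MvPolynomial.C (M i j) * MvPolynomial.X j :
              MvPolynomial (Fin g) ℂ) ^ e i)) :
    HurwitzIntegral g R F :=
  hurwitz_integral_subst_linear_general g R M hM f hf F hF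

end
end

section
/- Let R be a subring of ℂ and let f = 1 + Σ_{j≥1} b_j t^j ∈ ℂ[[t]] be a formal power series with constant term 1 such that b_j ∈ R for every j ≥ 1 and b_j ∈ 2R = {2r : r ∈ R} for every odd j. Then every coefficient of the formal power series f′/(2f) — that is, of the unique h ∈ ℂ[[t]] satisfying 2·f·h = f′, where f′ is the formal derivative of f — lies in R. -/
open Finset

/-! Since `f` has constant term `1`, the identity `f * h = f′ / 2` determines `h` by a
recursion that never divides, so it suffices that the coefficients `(n + 1) b_{n+1} / 2`
of `f′ / 2` lie in `R`: for odd `n + 1` the coefficient `b_{n+1}` is even, and for even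
`n + 1` the factor `n + 1` is. -/

namespace PowerSeries

variable {A : Type*} [CommRing A] {S : Subring A}

theorem coeff_mul_eq_coeff_add_sum {f : PowerSeries A} (hf0 : coeff 0 f = 1)
    (h : PowerSeries A) (n : ℕ) :
    coeff n (f * h) = coeff n h + ∑ i ∈ range n, coeff (i + 1) f * coeff (n - (i + 1)) h := by
  rw [coeff_mul, Nat.sum_antidiagonal_eq_sum_range_succ_mk, sum_range_succ', hf0, one_mul,
    Nat.sub_zero, add_comm]

theorem coeff_mem_of_coeff_mul_mem {f h : PowerSeries A} (hf0 : coeff 0 f = 1)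
    (hfS : ∀ j, coeff j f ∈ S) (hfhS : ∀ n, coeff n (f * h) ∈ S) (n : ℕ) :
    coeff n h ∈ S := by
  induction n using Nat.strong_induction_on with
  | _ n ih =>
    rw [← add_sub_cancel_right (coeff n h)
      (∑ i ∈ range n, coeff (i + 1) f * coeff (n - (i + 1)) h),
      ← coeff_mul_eq_coeff_add_sum hf0]
    exact sub_mem (hfhS n) <| sum_mem fun i hi =>
      mul_mem (hfS _) (ih _ (by have := mem_range.mp hi; omega))

end PowerSeries

theorem Subring.natCast_succ_mul_div_two_mem {K : Type*} [Field K] [NeZero (2 : K)]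
    {S : Subring K} {n : ℕ} {b : K} (hb : b ∈ S) (hb2 : Odd (n + 1) → ∃ r ∈ S, b = 2 * r) :
    ((n : K) + 1) * b / 2 ∈ S := by
  rcases Nat.even_or_odd n with hn | ⟨k, rfl⟩
  · obtain ⟨r, hr, rfl⟩ := hb2 hn.add_one
    rw [mul_left_comm, mul_div_cancel_left₀ _ two_ne_zero]
    exact mul_mem (add_mem (natCast_mem S n) (one_mem S)) hr
  · have hk : ((↑(2 * k + 1) : K) + 1) * b / 2 = (k + 1 : ℕ) * b := by
      push_cast
      field_simp
      ring
    rw [hk]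
    exact mul_mem (natCast_mem S _) hb

/-- Let `R` be a subring of `ℂ` and let `f = 1 + Σ_{j≥1} b_j t^j ∈ ℂ[[t]]` be a
formal power series with constant term `1`, all of whose coefficients lie in `R`
and whose odd-index coefficients lie in `2R = {2r : r ∈ R}`.  Let `h ∈ ℂ[[t]]` be
the unique power series with `2·f·h = f′`, where `f′` is the formal derivative of
`f` (characterized coefficientwise: the `n`-th coefficient of `f′` is
`(n+1)·(coefficient of `t^{n+1}` in `f`)`); that is, `h = f′/(2f)`.
Then every coefficient of `h` lies in `R`. -/
theorem coeff_log_deriv_half_mem (R : Subring ℂ) (f : PowerSeries ℂ)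
    (hf0 : PowerSeries.coeff 0 f = 1)
    (hfR : ∀ j : ℕ, PowerSeries.coeff j f ∈ R)
    (hfodd : ∀ j : ℕ, Odd j → ∃ r ∈ R, PowerSeries.coeff j f = 2 * r)
    (h : PowerSeries ℂ)
    (hh : 2 * (f * h) = PowerSeries.mk fun n : ℕ =>
      ((n : ℂ) + 1) * PowerSeries.coeff (n + 1) f) :
    ∀ n : ℕ, PowerSeries.coeff n h ∈ R := by
  refine PowerSeries.coeff_mem_of_coeff_mul_mem hf0 hfR fun n => ?_
  have hfh : PowerSeries.coeff n (f * h) = ((n : ℂ) + 1) * PowerSeries.coeff (n + 1) f / 2 := by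
    have hn := congrArg (PowerSeries.coeff n) hh
    rw [← map_ofNat PowerSeries.C 2, PowerSeries.coeff_C_mul, PowerSeries.coeff_mk] at hn
    rw [eq_div_iff two_ne_zero, mul_comm, hn]
  rw [hfh]
  exact Subring.natCast_succ_mul_div_two_mem (hfR _) (hfodd _)
end

section
/- Let c̃ and c be finitely supported functions from B(A_m) × B(A_m) to ℂ such that c(I, J) = 0 whenever Σ_k a_k I_k ≥ Σ_k a_k J_k, and suppose the polynomial F(x, y) = Σ_{I,J ∈ B(A_m)} c̃(I,J) x^I y^J + (x_1 − y_1)² Σ_{I,J ∈ B(A_m)} c(I,J) x^I y^J in the 2m variables x = (x_1, …, x_m), y = (y_1, …, y_m) is symmetric, i.e. F(y, x) = F(x, y). Then for all I = (i_1, i_2, …, i_m), J = (j_1, j_2, …, j_m) ∈ B(A_m) with Σ_k a_k i_k < Σ_k a_k j_k: (i) if i_1 = 0 then c(I,J) = c̃((j_1+2, j_2, …, j_m), I) − c̃(I, (j_1+2, j_2, …, j_m)); (ii) if i_1 = 1 then c(I,J) = 2c̃((j_1+3, j_2, …, j_m), (0, i_2, …, i_m)) − 2c̃((0, i_2, …,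 i_m), (j_1+3, j_2, …, j_m)) + c̃((j_1+2, j_2, …, j_m), (1, i_2, …, i_m)) − c̃((1, i_2, …, i_m), (j_1+2, j_2, …, j_m)); (iii) if i_1 ≥ 2 then c(I,J) = 2c((i_1−1, i_2, …, i_m), (j_1+1, j_2, …, j_m)) − c((i_1−2, i_2, …, i_m), (j_1+2, j_2, …, j_m)) + c̃((j_1+2, j_2, …, j_m), I) − c̃(I, (j_1+2, j_2, …, j_m)). -/
open Finset

noncomputable section

/-- The monomial `x^I y^J` in the `2m` variables `x_k = X (false, k)`,
`y_k = X (true, k)`, `1 ≤ k ≤ m`. -/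
def monoXY (m : ℕ) (I J : ℕ → ℕ) : MvPolynomial (Bool × ℕ) ℂ :=
  (∏ k ∈ Finset.Icc 1 m, MvPolynomial.X (false, k) ^ I k) *
    ∏ k ∈ Finset.Icc 1 m, MvPolynomial.X (true, k) ^ J k

/-! Put `B = J + 2e₁` and compare the coefficients of `x^I y^B` and `x^B y^I` in `F`.
Multiplication by `(x₁ - y₁)² = x₁² - 2x₁y₁ + y₁²` only shifts first exponents, so the first
coefficient is `c̃(I,B) + c(I - 2e₁, B) - 2c(I - e₁, J + e₁) + c(I, J)`. In the second, every
`c`-term has a first argument of weight `Σ aₖℓₖ` at least that of `J` and a second of weight at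
most that of `I`, so it vanishes. Symmetry of `F` equates the two coefficients, which is (i) and
(iii); (ii) follows by applying (i) to `(I - e₁, J + e₁)`. -/

open MvPolynomial Function

def expXY (m : ℕ) (I J : ℕ → ℕ) : (Bool × ℕ) →₀ ℕ :=
  ∑ k ∈ Icc 1 m, (Finsupp.single (false, k) (I k) + Finsupp.single (true, k) (J k))

def polyXY (m : ℕ) (S : Finset ((ℕ → ℕ) × (ℕ → ℕ))) (c : (ℕ → ℕ) → (ℕ → ℕ) → ℂ) :
    MvPolynomial (Bool × ℕ) ℂ :=
  ∑ p ∈ S, c p.1 p.2 • monoXY m p.1 p.2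

def weight (m : ℕ) (a I : ℕ → ℕ) : ℕ := ∑ k ∈ Icc 1 m, a k * I k

def swapXY : Bool × ℕ → Bool × ℕ := fun p => (!p.1, p.2)

section

variable {m : ℕ} {a : ℕ → ℕ}

lemma BAm.support_subset {ℓ : ℕ → ℕ} (h : BAm m a ℓ) :
    support ℓ ⊆ Icc 1 m := by
  intro j hj
  by_contra hj'
  simp only [coe_Icc, Set.mem_Icc, not_and_or, not_le] at hj'
  exact hj (h.1 j (by omega))

lemma support_update_one_subset (hm : 1 ≤ m) {I : ℕ → ℕ} (hI : support I ⊆ Icc 1 m)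
    (v : ℕ) : support (update I 1 v) ⊆ Icc 1 m := by
  intro j hj
  rcases eq_or_ne j 1 with rfl | hne
  · simp [hm]
  · exact hI (by rwa [mem_support, update_of_ne hne] at hj)

lemma expXY_apply (I J : ℕ → ℕ) (b : Bool) (k : ℕ) :
    expXY m I J (b, k) = if k ∈ Icc 1 m then (if b then J k else I k) else 0 := by
  rw [expXY, Finset.sum_apply']
  cases b <;> simp [Finsupp.single_apply]

lemma monoXY_eq_monomial (I J : ℕ → ℕ) : monoXY m I J = monomial (expXY m I J) 1 := by
  simp_rw [monoXY, X_pow_eq_monomial, ← monomial_sum_one, monomial_mul, one_mul, expXY,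
    Finset.sum_add_distrib]

lemma eq_and_eq_of_expXY_eq {I J I' J' : ℕ → ℕ} (hI : support I ⊆ Icc 1 m) (hJ : support J ⊆ Icc 1 m)
    (hI' : support I' ⊆ Icc 1 m) (hJ' : support J' ⊆ Icc 1 m)
    (h : expXY m I J = expXY m I' J') : I = I' ∧ J = J' := by
  have key (b : Bool) (k : ℕ) (hk : k ∈ Icc 1 m) :
      (if b then J k else I k) = if b then J' k else I' k := by
    simpa [expXY_apply, hk] using congr($h (b, k))
  have outside {f : ℕ → ℕ} (hf : support f ⊆ Icc 1 m) {k : ℕ} (hk : k ∉ Icc 1 m) : f k = 0 :=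
    notMem_support.1 fun h => hk (by exact_mod_cast hf h)
  constructor <;> funext k <;> by_cases hk : k ∈ Icc 1 m
  · simpa using key false k hk
  · rw [outside hI hk, outside hI' hk]
  · simpa using key true k hk
  · rw [outside hJ hk, outside hJ' hk]

lemma coeff_expXY_polyXY {S : Finset ((ℕ → ℕ) × (ℕ → ℕ))} {c : (ℕ → ℕ) → (ℕ → ℕ) → ℂ}
    (hcS : ∀ I J, c I J ≠ 0 → (I, J) ∈ S)
    (hS : ∀ p ∈ S, support p.1 ⊆ Icc 1 m ∧ support p.2 ⊆ Icc 1 m)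
    {I J : ℕ → ℕ} (hI : support I ⊆ Icc 1 m) (hJ : support J ⊆ Icc 1 m) :
    coeff (expXY m I J) (polyXY m S c) = c I J := by
  simp_rw [polyXY, coeff_sum, monoXY_eq_monomial, coeff_smul, coeff_monomial, smul_eq_mul,
    mul_ite, mul_one, mul_zero]
  rw [Finset.sum_eq_single (I, J)]
  · simp
  · intro p hp hne
    rw [if_neg]
    intro h
    obtain ⟨rfl, rfl⟩ := eq_and_eq_of_expXY_eq (hS p hp).1 (hS p hp).2 hI hJ h
    exact hne rfl
  · intro hmem
    rw [if_pos rfl]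
    exact not_not.1 (mt (hcS I J) hmem)

lemma mapDomain_swapXY_expXY (I J : ℕ → ℕ) :
    Finsupp.mapDomain swapXY (expXY m I J) = expXY m J I := by
  simp_rw [expXY, Finsupp.mapDomain_finsetSum, Finsupp.mapDomain_add, Finsupp.mapDomain_single,
    swapXY, Bool.not_false, Bool.not_true, add_comm]

lemma swapXY_injective : Injective swapXY := by
  rintro ⟨b, k⟩ ⟨b', k'⟩ h
  simpa [swapXY] using h

lemma coeff_expXY_comm_of_rename_eq {F : MvPolynomial (Bool × ℕ) ℂ} (hF : rename swapXY F = F)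
    (I J : ℕ → ℕ) : coeff (expXY m I J) F = coeff (expXY m J I) F := by
  rw [← coeff_rename_mapDomain _ swapXY_injective, mapDomain_swapXY_expXY, hF]

lemma single_add_single_le_expXY_iff (hm : 1 ≤ m) (I J : ℕ → ℕ) (p q : ℕ) :
    Finsupp.single (false, 1) p + Finsupp.single (true, 1) q ≤ expXY m I J ↔
      p ≤ I 1 ∧ q ≤ J 1 := by
  refine ⟨fun h => ⟨?_, ?_⟩, fun ⟨hp, hq⟩ => ?_⟩
  · simpa [expXY_apply, hm] using h (false, 1)
  · simpa [expXY_apply, hm] using h (true, 1)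
  · rintro ⟨b, k⟩
    rcases eq_or_ne k 1 with rfl | hk
    · cases b <;> simpa [expXY_apply, hm, Finsupp.single_apply]
    · simp [hk.symm]

lemma expXY_sub_single_add_single (I J : ℕ → ℕ) (p q : ℕ) :
    expXY m I J - (Finsupp.single (false, 1) p + Finsupp.single (true, 1) q) =
      expXY m (update I 1 (I 1 - p)) (update J 1 (J 1 - q)) := by
  ext ⟨b, k⟩
  rcases eq_or_ne k 1 with rfl | hk
  · by_cases hm : 1 ≤ m <;> cases b <;> simp [expXY_apply, hm]
  · cases b <;> simp [expXY_apply, hk]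

lemma coeff_expXY_X_pow_mul_X_pow_mul (hm : 1 ≤ m) (I J : ℕ → ℕ) (p q : ℕ)
    (Q : MvPolynomial (Bool × ℕ) ℂ) :
    coeff (expXY m I J) (X (false, 1) ^ p * X (true, 1) ^ q * Q) =
      if p ≤ I 1 ∧ q ≤ J 1 then
        coeff (expXY m (update I 1 (I 1 - p)) (update J 1 (J 1 - q))) Q
      else 0 := by
  rw [X_pow_eq_monomial, X_pow_eq_monomial, monomial_mul, one_mul, coeff_monomial_mul',
    expXY_sub_single_add_single, one_mul]
  simp only [single_add_single_le_expXY_iff hm]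

lemma coeff_expXY_polyXY_add_sq_mul (hm : 1 ≤ m)
    {Sct Sc : Finset ((ℕ → ℕ) × (ℕ → ℕ))} {ct c : (ℕ → ℕ) → (ℕ → ℕ) → ℂ}
    (hctS : ∀ I J, ct I J ≠ 0 → (I, J) ∈ Sct)
    (hSct : ∀ p ∈ Sct, support p.1 ⊆ Icc 1 m ∧ support p.2 ⊆ Icc 1 m)
    (hcS : ∀ I J, c I J ≠ 0 → (I, J) ∈ Sc)
    (hSc : ∀ p ∈ Sc, support p.1 ⊆ Icc 1 m ∧ support p.2 ⊆ Icc 1 m)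
    {I J : ℕ → ℕ} (hI : support I ⊆ Icc 1 m) (hJ : support J ⊆ Icc 1 m) :
    coeff (expXY m I J)
        (polyXY m Sct ct + (X (false, 1) - X (true, 1)) ^ 2 * polyXY m Sc c) =
      ct I J + (if 2 ≤ I 1 then c (update I 1 (I 1 - 2)) J else 0)
        + (if 2 ≤ J 1 then c I (update J 1 (J 1 - 2)) else 0)
        - 2 * (if 1 ≤ I 1 ∧ 1 ≤ J 1 then
            c (update I 1 (I 1 - 1)) (update J 1 (J 1 - 1)) else 0) := by
  set Q := polyXY m Sc c
  have hcoeff (p q : ℕ) := coeff_expXY_X_pow_mul_X_pow_mul hm I J p q Q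
  have hsupp (p q : ℕ) :
      coeff (expXY m (update I 1 (I 1 - p)) (update J 1 (J 1 - q))) Q =
        c (update I 1 (I 1 - p)) (update J 1 (J 1 - q)) :=
    coeff_expXY_polyXY hcS hSc (support_update_one_subset hm hI (I 1 - p))
      (support_update_one_subset hm hJ (J 1 - q))
  have hexpand : (X (false, 1) - X (true, 1)) ^ 2 * Q =
      X (false, 1) ^ 2 * X (true, 1) ^ 0 * Q + X (false, 1) ^ 0 * X (true, 1) ^ 2 * Q
        - (X (false, 1) ^ 1 * X (true, 1) ^ 1 * Q + X (false, 1) ^ 1 * X (true, 1) ^ 1 * Q) := by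
    ring
  simp only [hexpand, coeff_add, coeff_sub, hcoeff, hsupp]
  simp only [coeff_expXY_polyXY hctS hSct hI hJ, zero_le, and_true, true_and, Nat.sub_zero,
    update_eq_self]
  ring

lemma weight_update_mono (f : ℕ → ℕ) (i : ℕ) {v w : ℕ} (h : v ≤ w) :
    weight m a (update f i v) ≤ weight m a (update f i w) := by
  refine Finset.sum_le_sum fun k _ => Nat.mul_le_mul_left _ ?_
  rcases eq_or_ne k i with rfl | hk
  · simpa
  · simp [update_of_ne hk]

lemma weight_update_le {f : ℕ → ℕ} {i v : ℕ} (h : v ≤ f i) :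
    weight m a (update f i v) ≤ weight m a f := by
  simpa using weight_update_mono (a := a) (m := m) f i h

lemma le_weight_update {f : ℕ → ℕ} {i v : ℕ} (h : f i ≤ v) :
    weight m a f ≤ weight m a (update f i v) := by
  simpa using weight_update_mono (a := a) (m := m) f i h

lemma one_le_of_weight_lt {I J : ℕ → ℕ} (h : weight m a I < weight m a J) : 1 ≤ m := by
  by_contra hm
  simp [weight, show m = 0 by omega] at h

theorem c_eq_of_rename_swapXY_eq {Sct Sc : Finset ((ℕ → ℕ) × (ℕ → ℕ))} {ct c : (ℕ → ℕ) → (ℕ → ℕ) → ℂ}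
    (hctS : ∀ I J, ct I J ≠ 0 → (I, J) ∈ Sct)
    (hSct : ∀ p ∈ Sct, support p.1 ⊆ Icc 1 m ∧ support p.2 ⊆ Icc 1 m)
    (hcS : ∀ I J, c I J ≠ 0 → (I, J) ∈ Sc)
    (hSc : ∀ p ∈ Sc, support p.1 ⊆ Icc 1 m ∧ support p.2 ⊆ Icc 1 m)
    (hc0 : ∀ I J, weight m a J ≤ weight m a I → c I J = 0)
    (hsym : rename swapXY (polyXY m Sct ct + (X (false, 1) - X (true, 1)) ^ 2 * polyXY m Sc c) =
      polyXY m Sct ct + (X (false, 1) - X (true, 1)) ^ 2 * polyXY m Sc c)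
    {I J : ℕ → ℕ} (hI : support I ⊆ Icc 1 m) (hJ : support J ⊆ Icc 1 m)
    (hIJ : weight m a I < weight m a J) :
    c I J = ct (update J 1 (J 1 + 2)) I - ct I (update J 1 (J 1 + 2))
      + 2 * (if 1 ≤ I 1 then c (update I 1 (I 1 - 1)) (update J 1 (J 1 + 1)) else 0)
      - (if 2 ≤ I 1 then c (update I 1 (I 1 - 2)) (update J 1 (J 1 + 2)) else 0) := by
  have hm := one_le_of_weight_lt hIJ
  set B := update J 1 (J 1 + 2)
  have hB : support B ⊆ Icc 1 m := support_update_one_subset hm hJ _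
  have hsymm := coeff_expXY_comm_of_rename_eq (m := m) hsym I B
  rw [coeff_expXY_polyXY_add_sq_mul hm hctS hSct hcS hSc hI hB,
    coeff_expXY_polyXY_add_sq_mul hm hctS hSct hcS hSc hB hI] at hsymm
  have hvanish (v w : ℕ) (hv : J 1 ≤ v) (hw : w ≤ I 1) : c (update J 1 v) (update I 1 w) = 0 :=
    hc0 _ _ ((weight_update_le hw).trans (hIJ.le.trans (le_weight_update hv)))
  have hB1 : B 1 = J 1 + 2 := update_self ..
  have hJI : c J I = 0 := by simpa using hvanish (J 1) (I 1) le_rfl le_rfl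
  simp only [hB1, B, update_idem, Nat.add_sub_cancel, update_eq_self, hJI,
    show J 1 + 2 - 1 = J 1 + 1 by omega, le_add_self, true_and, and_true,
    show 1 ≤ J 1 + 2 by omega, hvanish _ _ (Nat.le_add_right _ _) (Nat.sub_le _ _), ite_self,
    if_true] at hsymm
  linear_combination hsymm

end

theorem coeff_recurrence_general (m : ℕ) (a : ℕ → ℕ)
    (ct c : (ℕ → ℕ) → (ℕ → ℕ) → ℂ)
    (Sct Sc : Finset ((ℕ → ℕ) × (ℕ → ℕ)))
    (hctsupp : ∀ I J, ct I J ≠ 0 → (I, J) ∈ Sct)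
    (hSct : ∀ p ∈ Sct, BAm m a p.1 ∧ BAm m a p.2)
    (hcsupp : ∀ I J, c I J ≠ 0 → (I, J) ∈ Sc)
    (hSc : ∀ p ∈ Sc, BAm m a p.1 ∧ BAm m a p.2)
    (hc0 : ∀ I J : ℕ → ℕ,
      ∑ k ∈ Finset.Icc 1 m, a k * J k ≤ ∑ k ∈ Finset.Icc 1 m, a k * I k → c I J = 0)
    (F : MvPolynomial (Bool × ℕ) ℂ)
    (hFdef : F = (∑ p ∈ Sct, ct p.1 p.2 • monoXY m p.1 p.2) +
      (MvPolynomial.X (false, 1) - MvPolynomial.X (true, 1)) ^ 2 *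
        ∑ p ∈ Sc, c p.1 p.2 • monoXY m p.1 p.2)
    (hsym : MvPolynomial.rename (fun p : Bool × ℕ => (!p.1, p.2)) F = F) :
    ∀ I J : ℕ → ℕ, BAm m a I → BAm m a J →
      ∑ k ∈ Finset.Icc 1 m, a k * I k < ∑ k ∈ Finset.Icc 1 m, a k * J k →
      (I 1 = 0 → c I J =
        ct (Function.update J 1 (J 1 + 2)) I - ct I (Function.update J 1 (J 1 + 2))) ∧
      (I 1 = 1 → c I J =
        2 * ct (Function.update J 1 (J 1 + 3)) (Function.update I 1 0) -
        2 * ct (Function.update I 1 0) (Function.update J 1 (J 1 + 3)) +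
        ct (Function.update J 1 (J 1 + 2)) (Function.update I 1 1) -
        ct (Function.update I 1 1) (Function.update J 1 (J 1 + 2))) ∧
      (2 ≤ I 1 → c I J =
        2 * c (Function.update I 1 (I 1 - 1)) (Function.update J 1 (J 1 + 1)) -
        c (Function.update I 1 (I 1 - 2)) (Function.update J 1 (J 1 + 2)) +
        ct (Function.update J 1 (J 1 + 2)) I - ct I (Function.update J 1 (J 1 + 2))) := by
  subst hFdef
  have support_of_BAm (S : Finset ((ℕ → ℕ) × (ℕ → ℕ)))
      (hS : ∀ p ∈ S, BAm m a p.1 ∧ BAm m a p.2) (p) (hp : p ∈ S) :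
      support p.1 ⊆ Icc 1 m ∧ support p.2 ⊆ Icc 1 m :=
    ⟨(hS p hp).1.support_subset, (hS p hp).2.support_subset⟩
  have key {I J : ℕ → ℕ} (hI : support I ⊆ Icc 1 m) (hJ : support J ⊆ Icc 1 m)
      (hIJ : weight m a I < weight m a J) :=
    c_eq_of_rename_swapXY_eq hctsupp (support_of_BAm Sct hSct) hcsupp (support_of_BAm Sc hSc)
      hc0 hsym hI hJ hIJ
  intro I J hI hJ hIJ
  have hm := one_le_of_weight_lt hIJ
  refine ⟨fun hI0 => ?_, fun hI1 => ?_, fun hI2 => ?_⟩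
  · rw [key hI.support_subset hJ.support_subset hIJ, if_neg (by omega), if_neg (by omega)]
    ring
  · have hI' := support_update_one_subset hm hI.support_subset 0
    have hJ' := support_update_one_subset hm hJ.support_subset (J 1 + 1)
    have hIJ' : weight m a (update I 1 0) < weight m a (update J 1 (J 1 + 1)) :=
      (weight_update_le (Nat.zero_le _)).trans_lt (hIJ.trans_le (le_weight_update (by omega)))
    have hrec := key hI' hJ' hIJ'
    simp only [update_self, update_idem] at hrec
    rw [if_neg (by omega), if_neg (by omega), show J 1 + 1 + 2 = J 1 + 3 by omega] at hrec
    rw [key hI.support_subset hJ.support_subset hIJ, if_pos (by omega), if_neg (by omega), hI1,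
      Nat.sub_self, hrec, (update_eq_self_iff (f := I)).2 hI1.symm]
    ring
  · rw [key hI.support_subset hJ.support_subset hIJ, if_pos (by omega), if_pos hI2]
    ring

/-- Let `ct = c̃` and `c` be finitely supported functions on `B(A_m) × B(A_m)`
(with supports contained in the finite sets `Sct` and `Sc` of pairs of elements
of `B(A_m)`), with `c I J = 0` whenever `Σ_k a k * I k ≥ Σ_k a k * J k`, and let
`F(x,y) = Σ_{I,J} c̃(I,J) x^I y^J + (x_1 − y_1)² Σ_{I,J} c(I,J) x^I y^J` be
symmetric, `F(y,x) = F(x,y)` (hypothesis `hsym`, via the variable swap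
`(b, k) ↦ (!b, k)`).  Then for all `I, J ∈ B(A_m)` with
`Σ_k a k * I k < Σ_k a k * J k`, the recurrences (i), (ii), (iii) hold, where
`(j_1+2, j_2, …, j_m)` is encoded as `Function.update J 1 (J 1 + 2)`, etc. -/
theorem coeff_recurrence (m : ℕ) (a : ℕ → ℕ) (hT : Telescopic m a)
    (ct c : (ℕ → ℕ) → (ℕ → ℕ) → ℂ)
    (Sct Sc : Finset ((ℕ → ℕ) × (ℕ → ℕ)))
    (hctsupp : ∀ I J, ct I J ≠ 0 → (I, J) ∈ Sct)
    (hSct : ∀ p ∈ Sct, BAm m a p.1 ∧ BAm m a p.2)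
    (hcsupp : ∀ I J, c I J ≠ 0 → (I, J) ∈ Sc)
    (hSc : ∀ p ∈ Sc, BAm m a p.1 ∧ BAm m a p.2)
    (hc0 : ∀ I J : ℕ → ℕ,
      ∑ k ∈ Finset.Icc 1 m, a k * J k ≤ ∑ k ∈ Finset.Icc 1 m, a k * I k → c I J = 0)
    (F : MvPolynomial (Bool × ℕ) ℂ)
    (hFdef : F = (∑ p ∈ Sct, ct p.1 p.2 • monoXY m p.1 p.2) +
      (MvPolynomial.X (false, 1) - MvPolynomial.X (true, 1)) ^ 2 *
        ∑ p ∈ Sc, c p.1 p.2 • monoXY m p.1 p.2)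
    (hsym : MvPolynomial.rename (fun p : Bool × ℕ => (!p.1, p.2)) F = F) :
    ∀ I J : ℕ → ℕ, BAm m a I → BAm m a J →
      ∑ k ∈ Finset.Icc 1 m, a k * I k < ∑ k ∈ Finset.Icc 1 m, a k * J k →
      (I 1 = 0 → c I J =
        ct (Function.update J 1 (J 1 + 2)) I - ct I (Function.update J 1 (J 1 + 2))) ∧
      (I 1 = 1 → c I J =
        2 * ct (Function.update J 1 (J 1 + 3)) (Function.update I 1 0) -
        2 * ct (Function.update I 1 0) (Function.update J 1 (J 1 + 3)) +
        ct (Function.update J 1 (J 1 + 2)) (Function.update I 1 1) -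
        ct (Function.update I 1 1) (Function.update J 1 (J 1 + 2))) ∧
      (2 ≤ I 1 → c I J =
        2 * c (Function.update I 1 (I 1 - 1)) (Function.update J 1 (J 1 + 1)) -
        c (Function.update I 1 (I 1 - 2)) (Function.update J 1 (J 1 + 2)) +
        ct (Function.update J 1 (J 1 + 2)) I - ct I (Function.update J 1 (J 1 + 2))) :=
  coeff_recurrence_general m a ct c Sct Sc hctsupp hSct hcsupp hSc hc0 F hFdef hsym

end
end

section
/- Let R be a subring of ℂ, let a ≥ 1 be an integer, and let h ∈ ℂ[[t]] be a formal power series with constant term 1 all of whose coefficients lie in R. Let Q = Σ_{i,j ≥ 1} q_{i,j} s^{i−1} t^{j−1} be a formal power series in two variables s, t over ℂ with symmetric coefficients, q_{i,j} = q_{j,i} for all i, j. If every coefficient of the two-variable formal power series (t^a·h(s) − s^a·h(t))² · Q lies in R, then q_{i,j} ∈ R for all i, j ≥ 1. -/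
/-! Modulo `s`, the series `(t^a h(s) - s^a h(t))^2` is `t^(2a)`, since `h(0) = 1` and `a ≥ 1`.
So the coefficient of `s^i t^(j+2a)` in `(t^a h(s) - s^a h(t))^2 Q` is `q_{i+1,j+1}` plus an
`R`-linear combination of coefficients of `Q` of `s`-degree less than `i`, and induction on the
`s`-degree puts every coefficient of `Q` in `R`. -/

open Finset

namespace MvPowerSeries

variable {σ S : Type*} [CommRing S] (R : Subring S)

theorem mem_range_map_subtype_iff {f : MvPowerSeries σ S} :
    f ∈ (map R.subtype).range ↔ ∀ d, coeff d f ∈ R := by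
  constructor
  · rintro ⟨g, rfl⟩ d
    simp
  · intro hf
    exact ⟨f.toSubring R hf, map_toSubring f R hf⟩

theorem X_pow_mem_range_map_subtype (x : σ) (m : ℕ) :
    (X x : MvPowerSeries σ S) ^ m ∈ (map R.subtype).range :=
  ⟨X x ^ m, by simp⟩

theorem mem_range_map_subtype_of_X_mul_mem {x : σ} {G : MvPowerSeries σ S}
    (hG : X x * G ∈ (map R.subtype).range) : G ∈ (map R.subtype).range := by
  rw [mem_range_map_subtype_iff] at hG ⊢
  intro d
  have hd := hG (Finsupp.single x 1 + d)
  rwa [X, coeff_add_monomial_mul, one_mul] at hd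

variable {R} (x : σ)

theorem coeff_mul_mem_of_lt {k : ℕ} {G Q : MvPowerSeries σ S}
    (hG : G ∈ (map R.subtype).range) (hQ : ∀ e : σ →₀ ℕ, e x < k → coeff e Q ∈ R)
    (d : σ →₀ ℕ) (hd : d x < k) : coeff d (G * Q) ∈ R := by
  classical
  rw [mem_range_map_subtype_iff] at hG
  rw [coeff_mul]
  refine sum_mem fun p hp => mul_mem (hG p.1) (hQ p.2 ?_)
  have hsum : p.1 x + p.2 x = d x := by
    rw [← Finsupp.add_apply, mem_antidiagonal.mp hp]
  omega

theorem coeff_X_mul_mem_of_lt {k : ℕ} {Q : MvPowerSeries σ S}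
    (hQ : ∀ e : σ →₀ ℕ, e x < k → coeff e Q ∈ R)
    (d : σ →₀ ℕ) (hd : d x < k + 1) : coeff d (X x * Q) ∈ R := by
  rw [X, coeff_monomial_mul]
  split_ifs with hle
  · rw [one_mul]
    refine hQ _ ?_
    have := hle x
    simp only [Finsupp.single_eq_same] at this
    simp only [Finsupp.tsub_apply, Finsupp.single_eq_same]
    omega
  · exact zero_mem R

theorem mem_range_map_subtype_of_X_pow_add_X_mul_mul_mem {y : σ} (hxy : x ≠ y) {m : ℕ}
    {G Q : MvPowerSeries σ S} (hG : G ∈ (map R.subtype).range)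
    (hFQ : (X y ^ m + X x * G) * Q ∈ (map R.subtype).range) :
    Q ∈ (map R.subtype).range := by
  rw [mem_range_map_subtype_iff] at hFQ ⊢
  suffices h : ∀ k, ∀ e : σ →₀ ℕ, e x < k → coeff e Q ∈ R from
    fun d => h (d x + 1) d (lt_add_one _)
  intro k
  induction k with
  | zero => intro e he; omega
  | succ k ih =>
    intro d hd
    have hcoeff : coeff d Q = coeff (Finsupp.single y m + d) ((X y ^ m + X x * G) * Q) -
        coeff (Finsupp.single y m + d) (G * (X x * Q)) := by
      rw [add_mul, map_add, X_pow_eq, coeff_add_monomial_mul, one_mul, mul_assoc,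
        mul_left_comm, add_sub_cancel_right]
    rw [hcoeff]
    refine sub_mem (hFQ _) (coeff_mul_mem_of_lt x hG (coeff_X_mul_mem_of_lt x ih) _ ?_)
    simpa [Finsupp.single_eq_of_ne hxy] using hd

theorem mem_range_map_subtype_of_mul_mem {y : σ} (hxy : x ≠ y) {m : ℕ}
    {F Q : MvPowerSeries σ S} (hF : F ∈ (map R.subtype).range) (hdvd : X x ∣ F - X y ^ m)
    (hFQ : F * Q ∈ (map R.subtype).range) : Q ∈ (map R.subtype).range := by
  obtain ⟨G, hG⟩ := hdvd
  have hFG : F = X y ^ m + X x * G := by rw [← hG]; ring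
  refine mem_range_map_subtype_of_X_pow_add_X_mul_mul_mem x hxy
    (mem_range_map_subtype_of_X_mul_mem R (x := x) ?_) (hFG ▸ hFQ)
  rw [← hG]
  exact sub_mem hF (X_pow_mem_range_map_subtype R y m)

end MvPowerSeries

theorem dvd_sq_sub_pow_of_dvd_sub_one {A : Type*} [CommRing A] {s t u v : A} {a : ℕ}
    (ha : a ≠ 0) (hu : s ∣ u - 1) : s ∣ (t ^ a * u - s ^ a * v) ^ 2 - t ^ (2 * a) := by
  have hsub : s ∣ t ^ a * u - s ^ a * v - t ^ a := by
    have : t ^ a * u - s ^ a * v - t ^ a = t ^ a * (u - 1) - s ^ a * v := by ring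
    rw [this]
    exact (hu.mul_left _).sub ((dvd_pow_self s ha).mul_right _)
  have : (t ^ a * u - s ^ a * v) ^ 2 - t ^ (2 * a) =
      (t ^ a * u - s ^ a * v - t ^ a) * (t ^ a * u - s ^ a * v + t ^ a) := by ring
  rw [this]
  exact hsub.mul_right _

open MvPowerSeries in
theorem X_zero_dvd_sub_one_of_coeff_eq {h : PowerSeries ℂ} (h0 : PowerSeries.coeff 0 h = 1)
    {Hs : MvPowerSeries (Fin 2) ℂ}
    (hHs : ∀ d : Fin 2 →₀ ℕ, coeff d Hs = if d 1 = 0 then PowerSeries.coeff (d 0) h else 0) :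
    X 0 ∣ Hs - 1 := by
  rw [X_dvd_iff]
  intro d hd0
  rw [map_sub, hHs, coeff_one]
  by_cases hd1 : d 1 = 0
  · have hd : d = 0 := by
      ext i
      fin_cases i <;> assumption
    simp [hd, h0]
  · have hd : d ≠ 0 := fun hd => hd1 (by simp [hd])
    simp [hd1, hd]

theorem q_coeff_mem_of_sq_mul_mem_general (R : Subring ℂ) (a : ℕ) (ha : 1 ≤ a)
    (h : PowerSeries ℂ) (h0 : PowerSeries.coeff 0 h = 1)
    (hR : ∀ n : ℕ, PowerSeries.coeff n h ∈ R)
    (q : ℕ → ℕ → ℂ)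
    (Q : MvPowerSeries (Fin 2) ℂ)
    (hQ : ∀ d : Fin 2 →₀ ℕ, MvPowerSeries.coeff d Q = q (d 0 + 1) (d 1 + 1))
    (Hs : MvPowerSeries (Fin 2) ℂ)
    (hHs : ∀ d : Fin 2 →₀ ℕ, MvPowerSeries.coeff d Hs =
      if d 1 = 0 then PowerSeries.coeff (d 0) h else 0)
    (Ht : MvPowerSeries (Fin 2) ℂ)
    (hHt : ∀ d : Fin 2 →₀ ℕ, MvPowerSeries.coeff d Ht =
      if d 0 = 0 then PowerSeries.coeff (d 1) h else 0)
    (hE : ∀ d : Fin 2 →₀ ℕ, MvPowerSeries.coeff d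
      ((MvPowerSeries.X 1 ^ a * Hs - MvPowerSeries.X 0 ^ a * Ht) ^ 2 * Q) ∈ R) :
    ∀ i j : ℕ, 1 ≤ i → 1 ≤ j → q i j ∈ R := by
  open MvPowerSeries in
  have hH_mem (H : MvPowerSeries (Fin 2) ℂ) (k l : Fin 2)
      (hH : ∀ d, coeff d H = if d l = 0 then PowerSeries.coeff (d k) h else 0) :
      H ∈ (map R.subtype).range := by
    refine (mem_range_map_subtype_iff R).mpr fun d => ?_
    rw [hH]
    split_ifs
    exacts [hR _, zero_mem R]
  have hE_mem : (X 1 ^ a * Hs - X 0 ^ a * Ht) ^ 2 ∈ (map R.subtype).range :=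
    pow_mem (sub_mem (mul_mem (X_pow_mem_range_map_subtype R 1 a) (hH_mem Hs 0 1 hHs))
      (mul_mem (X_pow_mem_range_map_subtype R 0 a) (hH_mem Ht 1 0 hHt))) 2
  have hQ_mem : Q ∈ (map R.subtype).range :=
    mem_range_map_subtype_of_mul_mem 0 (by decide) hE_mem
      (dvd_sq_sub_pow_of_dvd_sub_one (by omega) (X_zero_dvd_sub_one_of_coeff_eq h0 hHs))
      ((mem_range_map_subtype_iff R).mpr hE)
  intro i j hi hj
  have hq := (mem_range_map_subtype_iff R).mp hQ_mem
    (Finsupp.single 0 (i - 1) + Finsupp.single 1 (j - 1))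
  simpa [hQ, Nat.sub_add_cancel hi, Nat.sub_add_cancel hj] using hq

/-- Let `R` be a subring of `ℂ`, `a ≥ 1`, and `h ∈ ℂ[[t]]` a power series with
constant term `1` all of whose coefficients lie in `R`.  Let
`Q = Σ_{i,j ≥ 1} q_{i,j} s^{i−1} t^{j−1}` be a two-variable formal power series
(in `s = X 0` and `t = X 1`) with symmetric coefficients `q_{i,j} = q_{j,i}`.
Here `Hs` and `Ht` denote `h(s)` and `h(t)` regarded as two-variable power series
(characterized coefficientwise by `hHs`, `hHt`).  If every coefficient of
`(t^a·h(s) − s^a·h(t))² · Q` lies in `R`, then `q_{i,j} ∈ R` for all `i, j ≥ 1`. -/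
theorem q_coeff_mem_of_sq_mul_mem (R : Subring ℂ) (a : ℕ) (ha : 1 ≤ a)
    (h : PowerSeries ℂ) (h0 : PowerSeries.coeff 0 h = 1)
    (hR : ∀ n : ℕ, PowerSeries.coeff n h ∈ R)
    (q : ℕ → ℕ → ℂ) (hqsym : ∀ i j, 1 ≤ i → 1 ≤ j → q i j = q j i)
    (Q : MvPowerSeries (Fin 2) ℂ)
    (hQ : ∀ d : Fin 2 →₀ ℕ, MvPowerSeries.coeff d Q = q (d 0 + 1) (d 1 + 1))
    (Hs : MvPowerSeries (Fin 2) ℂ)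
    (hHs : ∀ d : Fin 2 →₀ ℕ, MvPowerSeries.coeff d Hs =
      if d 1 = 0 then PowerSeries.coeff (d 0) h else 0)
    (Ht : MvPowerSeries (Fin 2) ℂ)
    (hHt : ∀ d : Fin 2 →₀ ℕ, MvPowerSeries.coeff d Ht =
      if d 0 = 0 then PowerSeries.coeff (d 1) h else 0)
    (hE : ∀ d : Fin 2 →₀ ℕ, MvPowerSeries.coeff d
      ((MvPowerSeries.X 1 ^ a * Hs - MvPowerSeries.X 0 ^ a * Ht) ^ 2 * Q) ∈ R) :
    ∀ i j : ℕ, 1 ≤ i → 1 ≤ j → q i j ∈ R :=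
  q_coeff_mem_of_sq_mul_mem_general R a ha h h0 hR q Q hQ Hs hHs Ht hHt hE
end
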